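/- arXiv:2203.11456 — 4 statements merged into one kernel-verified Lean document; each statement's English description precedes it below -/
import Mathlib

section
/- Let a, b, c be real numbers with a > 0 and c > 0. If there exist λ ∈ ℝ and a derivation D of μ_{a,b,c} such that B(a,b,c) = λ·I + D (as 4×4 matrices, where I is the identity matrix), then b = 0; in particular the matrix B(a,b,c) is diagonal. -/
/-- The Lie bracket `μ_{a,b,c}` on `ℝ⁴`, determined on the standard basis by
`[e₁,e₂] = a·e₃ + b·e₄`, `[e₁,e₃] = c·e₄` and all other brackets of basis
vectors (with `i < j`) equal to zero, extended bilinearly and antisymmetrically. -/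
noncomputable def muBracket (a b c : ℝ) (x y : Fin 4 → ℝ) : Fin 4 → ℝ :=
  fun k =>
    if k = 2 then a * (x 0 * y 1 - x 1 * y 0)
    else if k = 3 then
      b * (x 0 * y 1 - x 1 * y 0) + c * (x 0 * y 2 - x 2 * y 0)
    else 0

/-- `D` is a derivation of the bracket `μ_{a,b,c}`:
`D[x,y] = [Dx,y] + [x,Dy]` for all `x, y ∈ ℝ⁴`. Here the linear map `D` is
given by its matrix in the standard basis, so that `D e_j = ∑ i, D i j • e_i`. -/
def IsDerivation (a b c : ℝ) (D : Matrix (Fin 4) (Fin 4) ℝ) : Prop :=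
  ∀ x y : Fin 4 → ℝ,
    D.mulVec (muBracket a b c x y) =
      muBracket a b c (D.mulVec x) y + muBracket a b c x (D.mulVec y)

/-- The Bach matrix `B(a,b,c)` of the nilpotent Lie group determined by `μ_{a,b,c}`. -/
noncomputable def BachMatrix (a b c : ℝ) : Matrix (Fin 4) (Fin 4) ℝ :=
  !![(1/8) * (4*a^4 + 8*a^2*b^2 - a^2*c^2 + 4*b^4 + 8*b^2*c^2 + 4*c^4), 0, 0, 0;
     0, (1/24) * (12*a^4 + 24*a^2*b^2 - a^2*c^2 + 12*b^4 + 8*b^2*c^2 - 4*c^4),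
        (2/3) * b * c * (a^2 + b^2 + c^2), 0;
     0, (2/3) * b * c * (a^2 + b^2 + c^2),
        -(1/24) * (20*a^4 - a^2*c^2 + 24*a^2*b^2 + 4*b^4 - 8*b^2*c^2 - 12*c^4),
        -(2/3) * a * b * (a^2 + b^2 + c^2);
     0, 0, -(2/3) * a * b * (a^2 + b^2 + c^2),
        (1/24) * (-4*a^4 + 3*a^2*c^2 - 8*a^2*b^2 - 20*(b^2 + c^2)^2)]

/-- if `B(a,b,c) = λ·I + D` for some derivation `D` of `μ_{a,b,c}`,
then `b = 0`; in particular the matrix `B(a,b,c)` is diagonal. -/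
theorem algebraic_soliton_implies_b_eq_zero (a b c : ℝ) (ha : 0 < a) (hc : 0 < c)
    (h : ∃ (lam : ℝ) (D : Matrix (Fin 4) (Fin 4) ℝ), IsDerivation a b c D ∧
        BachMatrix a b c = lam • (1 : Matrix (Fin 4) (Fin 4) ℝ) + D) :
    b = 0 ∧ ∀ i j : Fin 4, i ≠ j → BachMatrix a b c i j = 0 := by
  obtain ⟨lam, D, hD, hB⟩ := h
  have hD12 : D 1 2 = (2/3) * b * c * (a^2 + b^2 + c^2) := by
    have h2 := congrFun (congrFun hB 1) 2
    simp [BachMatrix, Matrix.one_apply, Matrix.add_apply, Matrix.smul_apply] at h2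
    linarith
  have hD13 : D 1 3 = 0 := by
    have h2 := congrFun (congrFun hB 1) 3
    simp [BachMatrix, Matrix.one_apply, Matrix.add_apply, Matrix.smul_apply] at h2
    linarith
  have h1 := congrFun (hD ![1,0,0,0] ![0,1,0,0]) 1
  simp [muBracket, Matrix.mulVec, dotProduct, Fin.sum_univ_four] at h1
  rw [hD12, hD13] at h1
  have hb : b = 0 := by
    have hpos : 0 < (2/3) * c * (a^2+b^2+c^2) * a := by positivity
    have hz : b * ((2/3) * c * (a^2+b^2+c^2) * a) = 0 := by linear_combination h1
    rcases mul_eq_zero.mp hz with h' | h'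
    · exact h'
    · linarith
  refine ⟨hb, fun i j hij => ?_⟩
  subst hb
  fin_cases i <;> fin_cases j <;> simp_all [BachMatrix, Matrix.vecHead, Matrix.vecTail]
end

section
/- There exist a real number λ and a nonzero derivation D of the Lie bracket μ_{1,0,1} (the bracket with [e₁,e₂] = e₃ and [e₁,e₃] = e₄) such that B(1,0,1) = λ·I + D as 4×4 matrices. (In other words, μ_{1,0,1} is an algebraic Bach soliton.) -/
/-- the bracket `μ_{1,0,1}` (with `[e₁,e₂] = e₃`, `[e₁,e₃] = e₄`)
is an algebraic Bach soliton: `B(1,0,1) = λ·I + D` for some `λ ∈ ℝ` and some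
nonzero derivation `D` of `μ_{1,0,1}`. -/
theorem exists_algebraic_bach_soliton :
    ∃ (lam : ℝ) (D : Matrix (Fin 4) (Fin 4) ℝ), D ≠ 0 ∧ IsDerivation 1 0 1 D ∧
      BachMatrix 1 0 1 = lam • (1 : Matrix (Fin 4) (Fin 4) ℝ) + D := by
  refine ⟨35/24, !![-7/12, 0, 0, 0; 0, -14/12, 0, 0; 0, 0, -21/12, 0; 0, 0, 0, -28/12],
    ?_, ?_, ?_⟩
  · intro h
    have := congrFun (congrFun h 0) 0
    norm_num [Matrix.zero_apply] at this
  · intro x y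
    funext k
    fin_cases k <;>
      simp [muBracket, Matrix.mulVec, dotProduct, Fin.sum_univ_four,
        Fin.isValue, show ((2:Fin 4) ≠ 3) by decide] <;> ring
  · funext i j
    fin_cases i <;> fin_cases j <;>
      norm_num [BachMatrix, Matrix.one_apply, Matrix.smul_apply, Fin.ext_iff]
end

section
/- Let a, c be real numbers with a > 0 and c > 0. If there exist λ ∈ ℝ and a derivation D of μ_{a,0,c} such that B(a,0,c) = λ·I + D (as 4×4 matrices), then a = c. (Thus the algebraic Bach soliton is unique up to scaling among the brackets μ_{a,0,c}.) -/
set_option maxHeartbeats 1000000 in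
/-- uniqueness of the algebraic Bach soliton among the brackets
`μ_{a,0,c}`: if `B(a,0,c) = λ·I + D` for a derivation `D` of `μ_{a,0,c}`, then `a = c`. -/
theorem algebraic_bach_soliton_unique (a c : ℝ) (ha : 0 < a) (hc : 0 < c)
    (h : ∃ (lam : ℝ) (D : Matrix (Fin 4) (Fin 4) ℝ), IsDerivation a 0 c D ∧
        BachMatrix a 0 c = lam • (1 : Matrix (Fin 4) (Fin 4) ℝ) + D) :
    a = c := by
  obtain ⟨lam, D, hder, heq⟩ := h
  have h00 : D 0 0 = BachMatrix a 0 c 0 0 - lam := by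
    have := congrFun (congrFun heq 0) 0
    simp [Matrix.one_apply] at this; linarith
  have h11 : D 1 1 = BachMatrix a 0 c 1 1 - lam := by
    have := congrFun (congrFun heq 1) 1
    simp [Matrix.one_apply] at this; linarith
  have h22 : D 2 2 = BachMatrix a 0 c 2 2 - lam := by
    have := congrFun (congrFun heq 2) 2
    simp [Matrix.one_apply] at this; linarith
  have h33 : D 3 3 = BachMatrix a 0 c 3 3 - lam := by
    have := congrFun (congrFun heq 3) 3
    simp [Matrix.one_apply] at this; linarith
  have h23 : D 2 3 = 0 := by
    have := congrFun (congrFun heq 2) 3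
    simp [BachMatrix, Matrix.one_apply] at this; linarith
  have h30 : D 3 0 = 0 := by
    have := congrFun (congrFun heq 3) 0
    simp [BachMatrix, Matrix.one_apply, Matrix.vecHead, Matrix.vecTail] at this; linarith
  have h31 : D 3 1 = 0 := by
    have := congrFun (congrFun heq 3) 1
    simp [BachMatrix, Matrix.one_apply, Matrix.vecHead, Matrix.vecTail] at this; linarith
  have e1 := congrFun (hder (Pi.single 0 1) (Pi.single 1 1)) 2
  have e2 := congrFun (hder (Pi.single 0 1) (Pi.single 2 1)) 3
  simp [muBracket, Matrix.mulVec, dotProduct, Fin.sum_univ_four,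
    Pi.single_apply, Fin.ext_iff, show ((3:Fin 4):ℕ) ≠ 2 from by decide,
    show ¬((0:ℕ) = ((3:Fin 4):ℕ)) from by decide,
    show ¬((1:ℕ) = ((3:Fin 4):ℕ)) from by decide] at e1 e2
  simp [BachMatrix] at h00 h11 h22 h33
  rw [h00, h11, h22] at e1
  rw [h00, h22, h33] at e2
  have E1 : (-(24⁻¹ * (20 * a ^ 4 - a ^ 2 * c ^ 2 - 12 * c ^ 4)) - lam) =
      ((8⁻¹ * (4 * a ^ 4 - a ^ 2 * c ^ 2 + 4 * c ^ 4) - lam) +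
       (24⁻¹ * (12 * a ^ 4 - a ^ 2 * c ^ 2 - 4 * c ^ 4) - lam)) :=
    mul_right_cancel₀ ha.ne' (by linear_combination e1)
  have E2 : (24⁻¹ * (-(4 * a ^ 4) + 3 * a ^ 2 * c ^ 2 - 20 * (c ^ 2) ^ 2) - lam) =
      ((8⁻¹ * (4 * a ^ 4 - a ^ 2 * c ^ 2 + 4 * c ^ 4) - lam) +
       (-(24⁻¹ * (20 * a ^ 4 - a ^ 2 * c ^ 2 - 12 * c ^ 4)) - lam)) :=
    mul_right_cancel₀ hc.ne' (by linear_combination e2)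
  have key : a^4 = c^4 := by linarith
  have h2 : a^2 = c^2 := by
    have hf : (a^2 - c^2) * (a^2 + c^2) = 0 := by linear_combination key
    rcases mul_eq_zero.mp hf with h | h
    · linarith
    · nlinarith
  have hf : (a - c) * (a + c) = 0 := by linear_combination h2
  rcases mul_eq_zero.mp hf with h | h
  · linarith
  · linarith
end

section
/- Let T ∈ (0, ∞], let L : [0,T) → (4×4 real matrices) be continuous with every L(t) lower triangular (i.e. L(t)_{kl} = 0 whenever k < l), and let μ : [0,T) → Λ²(ℝ⁴)*⊗ℝ⁴ be a differentiable solution of the linear ODE μ'(t) = (1/2)·π(L(t))·μ(t). If the components of μ(0) in the standard basis satisfy μ_{ij}^k(0) = 0 for every triple (i,j,k) with i < j and (i,j,k) ∉ {(1,2,3), (1,2,4), (1,3,4)}, then for every t ∈ [0,T) the components of μ(t) satisfy the same vanishing: μ_{ij}^k(t) = 0 for all i < j with (i,j,k) ∉ {(1,2,3), (1,2,4), (1,3,4)}. -/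
/-!
For lower-triangular `A`, the components `(i, j, k)` of `π(A) μ` lying in the set `B` of triples
forced to vanish involve only components of `μ` in `B` or on the diagonal (zero by
antisymmetry), because `B` is closed under lowering `k` and raising `i` or `j`. So the part `b`
of `μ` supported on `B` solves the linear ODE `b' = P_B π(L / 2) b`, with `P_B` the projection
onto the `B`-components. Its coefficients are continuous, hence bounded on compact time
intervals, and `b(0) = 0`, so uniqueness of solutions of Lipschitz ODEs gives `b ≡ 0`.
-/

open Set

section LinearODE

variable {E : Type*} [NormedAddCommGroup E] [NormedSpace ℝ E]

theorem eqOn_zero_of_hasDerivWithinAt_clm_apply {A : ℝ → E →L[ℝ] E} {f : ℝ → E} {a b : ℝ}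
    (hA : ContinuousOn A (Icc a b)) (hf : ContinuousOn f (Icc a b))
    (hf' : ∀ t ∈ Ico a b, HasDerivWithinAt f (A t (f t)) (Ici t) t) (ha : f a = 0) :
    EqOn f 0 (Icc a b) := by
  obtain ⟨C, hC⟩ := isCompact_Icc.exists_bound_of_continuousOn hA
  have hlip : ∀ t ∈ Ico a b, LipschitzOnWith C.toNNReal (A t) univ := fun t ht =>
    ((A t).lipschitz.weaken (by
      rw [← NNReal.coe_le_coe, coe_nnnorm]
      exact (hC t (Ico_subset_Icc_self ht)).trans (Real.le_coe_toNNReal C))).lipschitzOnWith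
  refine ODE_solution_unique_of_mem_Icc_right hlip hf hf' (fun _ _ => mem_univ _)
    continuousOn_const (fun t _ => ?_) (fun _ _ => mem_univ _) ha
  rw [Pi.zero_apply, map_zero]
  exact hasDerivWithinAt_const t (Ici t) (0 : E)

end LinearODE

namespace GaugedFlow

variable {ι : Type*} [Fintype ι]

/-- The paper's `π(A) μ`, as a bilinear function of `(A, μ)`. -/
def infAction : Matrix ι ι ℝ →ₗ[ℝ] (ι → ι → ι → ℝ) →ₗ[ℝ] (ι → ι → ι → ℝ) :=
  LinearMap.mk₂ ℝ (fun A μ i j k => ∑ l, (A k l * μ i j l - A l i * μ l j k - A l j * μ i l k))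
    (fun _ _ _ => by
      ext
      simp only [Matrix.add_apply, Pi.add_apply, ← Finset.sum_add_distrib]
      exact Finset.sum_congr rfl fun _ _ => by ring)
    (fun _ _ _ => by
      ext
      simp only [Matrix.smul_apply, Pi.smul_apply, smul_eq_mul, Finset.mul_sum]
      exact Finset.sum_congr rfl fun _ _ => by ring)
    (fun _ _ _ => by
      ext
      simp only [Pi.add_apply, ← Finset.sum_add_distrib]
      exact Finset.sum_congr rfl fun _ _ => by ring)
    (fun _ _ _ => by
      ext
      simp only [Pi.smul_apply, smul_eq_mul, Finset.mul_sum]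
      exact Finset.sum_congr rfl fun _ _ => by ring)

@[simp]
theorem infAction_apply (A : Matrix ι ι ℝ) (μ : ι → ι → ι → ℝ) (i j k : ι) :
    infAction A μ i j k = ∑ l, (A k l * μ i j l - A l i * μ l j k - A l j * μ i l k) :=
  rfl

theorem continuousOn_infAction {L : ℝ → Matrix ι ι ℝ} {s : Set ℝ} (hL : ContinuousOn L s) :
    ContinuousOn (fun t => LinearMap.toContinuousLinearMap (infAction (L t))) s :=
  (LinearMap.toContinuousLinearMap.toLinearMap ∘ₗ infAction).continuous_of_finiteDimensional
    |>.comp_continuousOn hL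

variable [DecidableEq ι]

noncomputable def componentProj (B : Finset (ι × ι × ι)) :
    (ι → ι → ι → ℝ) →L[ℝ] (ι → ι → ι → ℝ) :=
  LinearMap.toContinuousLinearMap
    { toFun := fun μ i j k => if (i, j, k) ∈ B then μ i j k else 0
      map_add' := fun _ _ => by ext; split_ifs <;> simp [*]
      map_smul' := fun _ _ => by ext; split_ifs <;> simp [*] }

@[simp]
theorem componentProj_apply (B : Finset (ι × ι × ι)) (μ : ι → ι → ι → ℝ) (i j k : ι) :
    componentProj B μ i j k = if (i, j, k) ∈ B then μ i j k else 0 :=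
  rfl

theorem componentProj_eq_zero_iff {B : Finset (ι × ι × ι)} {μ : ι → ι → ι → ℝ} :
    componentProj B μ = 0 ↔ ∀ i j k, (i, j, k) ∈ B → μ i j k = 0 := by
  simp only [funext_iff, componentProj_apply, Pi.zero_apply, ite_eq_right_iff]

theorem mul_componentProj_apply {B : Finset (ι × ι × ι)} {μ : ι → ι → ι → ℝ} {c : ℝ} {i j k : ι}
    (h : c ≠ 0 → (i, j, k) ∈ B ∨ μ i j k = 0) : c * componentProj B μ i j k = c * μ i j k := by
  rcases eq_or_ne c 0 with rfl | hc
  · simp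
  · rcases h hc with h | h <;> simp [h]

variable [LinearOrder ι]

/-- The components in `B` of `π(A) μ`, for `A` lower triangular, involve only components of `μ`
in `B` or on the diagonal. -/
structure TriangularStable (B : Finset (ι × ι × ι)) : Prop where
  of_le_out : ∀ ⦃i j k l⦄, (i, j, k) ∈ B → l ≤ k → (i, j, l) ∈ B
  of_le_fst : ∀ ⦃i j k l⦄, (i, j, k) ∈ B → i ≤ l → l ≠ j → (l, j, k) ∈ B
  of_le_snd : ∀ ⦃i j k l⦄, (i, j, k) ∈ B → j ≤ l → l ≠ i → (i, l, k) ∈ B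

theorem componentProj_infAction_componentProj {B : Finset (ι × ι × ι)} (hB : TriangularStable B)
    {A : Matrix ι ι ℝ} (hA : ∀ k l, k < l → A k l = 0) {μ : ι → ι → ι → ℝ}
    (hμ : ∀ i k, μ i i k = 0) :
    componentProj B (infAction A (componentProj B μ)) = componentProj B (infAction A μ) := by
  have le_of_ne_zero : ∀ {k l}, A k l ≠ 0 → l ≤ k := fun h => not_lt.1 fun hlt => h (hA _ _ hlt)
  ext i j k
  rw [componentProj_apply, componentProj_apply]
  split_ifs with hijk
  · simp only [infAction_apply]
    refine Finset.sum_congr rfl fun l _ => ?_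
    rw [mul_componentProj_apply fun h => .inl (hB.of_le_out hijk (le_of_ne_zero h)),
      mul_componentProj_apply fun h => ?_, mul_componentProj_apply fun h => ?_]
    · rcases eq_or_ne l i with rfl | hli
      · exact .inr (hμ l k)
      · exact .inl (hB.of_le_snd hijk (le_of_ne_zero h) hli)
    · rcases eq_or_ne l j with rfl | hlj
      · exact .inr (hμ l k)
      · exact .inl (hB.of_le_fst hijk (le_of_ne_zero h) hlj)
  · rfl

theorem components_eq_zero_of_hasDerivAt_infAction {B : Finset (ι × ι × ι)}
    (hB : TriangularStable B) {L : ℝ → Matrix ι ι ℝ} {μ : ℝ → ι → ι → ι → ℝ} {a b : ℝ}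
    (hL : ContinuousOn L (Icc a b)) (hLtri : ∀ t ∈ Icc a b, ∀ k l, k < l → L t k l = 0)
    (hdiag : ∀ t ∈ Icc a b, ∀ i k, μ t i i k = 0)
    (hμ : ∀ t ∈ Icc a b, HasDerivAt μ (infAction (L t) (μ t)) t)
    (ha : ∀ i j k, (i, j, k) ∈ B → μ a i j k = 0) :
    ∀ t ∈ Icc a b, ∀ i j k, (i, j, k) ∈ B → μ t i j k = 0 := by
  intro t ht
  rw [← componentProj_eq_zero_iff] at ha ⊢
  let A t := componentProj B ∘L LinearMap.toContinuousLinearMap (infAction (L t))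
  have hA : ContinuousOn A (Icc a b) := continuousOn_const.clm_comp (continuousOn_infAction hL)
  have hf' : ∀ t ∈ Icc a b,
      HasDerivAt (fun s => componentProj B (μ s)) (A t (componentProj B (μ t))) t := by
    intro t ht
    have := (componentProj B).hasFDerivAt.comp_hasDerivAt t (hμ t ht)
    rwa [← componentProj_infAction_componentProj hB (hLtri t ht) (hdiag t ht)] at this
  exact eqOn_zero_of_hasDerivWithinAt_clm_apply hA
    (fun t ht => (hf' t ht).continuousAt.continuousWithinAt)
    (fun t ht => (hf' t (Ico_subset_Icc_self ht)).hasDerivWithinAt) ha ht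

/-- Indices are `0`-based: `(0, 1, 2)` is the paper's `(1, 2, 3)`. -/
def goodTriples : Finset (Fin 4 × Fin 4 × Fin 4) := {(0, 1, 2), (0, 1, 3), (0, 2, 3)}

def vanishingPattern : Finset (Fin 4 × Fin 4 × Fin 4) :=
  Finset.univ.filter fun (i, j, k) => i ≠ j ∧ (min i j, max i j, k) ∉ goodTriples

theorem triangularStable_vanishingPattern : TriangularStable vanishingPattern :=
  ⟨by decide, by decide, by decide⟩

theorem mem_vanishingPattern_of_lt {i j k : Fin 4} (hij : i < j) :
    (i, j, k) ∈ vanishingPattern ↔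
      (i, j, k) ≠ (0, 1, 2) ∧ (i, j, k) ≠ (0, 1, 3) ∧ (i, j, k) ≠ (0, 2, 3) := by
  revert i j k
  decide

theorem mem_vanishingPattern_comm {i j k : Fin 4} :
    (i, j, k) ∈ vanishingPattern ↔ (j, i, k) ∈ vanishingPattern := by
  revert i j k
  decide

theorem ne_of_mem_vanishingPattern {i j k : Fin 4} (h : (i, j, k) ∈ vanishingPattern) : i ≠ j :=
  (Finset.mem_filter.1 h).2.1

theorem eq_zero_of_mem_vanishingPattern {ν : Fin 4 → Fin 4 → Fin 4 → ℝ}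
    (hanti : ∀ i j k, ν i j k = -ν j i k)
    (hν : ∀ i j k, i < j → (i, j, k) ≠ (0, 1, 2) → (i, j, k) ≠ (0, 1, 3) →
      (i, j, k) ≠ (0, 2, 3) → ν i j k = 0)
    {i j k : Fin 4} (hijk : (i, j, k) ∈ vanishingPattern) : ν i j k = 0 := by
  rcases (ne_of_mem_vanishingPattern hijk).lt_or_gt with hij | hji
  · obtain ⟨h₁, h₂, h₃⟩ := (mem_vanishingPattern_of_lt hij).1 hijk
    exact hν i j k hij h₁ h₂ h₃
  · obtain ⟨h₁, h₂, h₃⟩ := (mem_vanishingPattern_of_lt hji).1 (mem_vanishingPattern_comm.1 hijk)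
    rw [hanti, hν j i k hji h₁ h₂ h₃, neg_zero]

end GaugedFlow

open GaugedFlow

theorem gauged_flow_preserves_structure_general (T : EReal)
    (L : ℝ → Matrix (Fin 4) (Fin 4) ℝ)
    (hLcont : ContinuousOn L {t : ℝ | 0 ≤ t ∧ (t : EReal) < T})
    (hLtri : ∀ t : ℝ, 0 ≤ t → (t : EReal) < T → ∀ k l : Fin 4, k < l → L t k l = 0)
    (μ : ℝ → Fin 4 → Fin 4 → Fin 4 → ℝ)
    (hanti : ∀ (t : ℝ) (i j k : Fin 4), μ t i j k = -μ t j i k)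
    (hode : ∀ t : ℝ, 0 ≤ t → (t : EReal) < T → ∀ i j k : Fin 4,
      HasDerivAt (fun s => μ s i j k)
        ((1/2) * ∑ l : Fin 4,
          (L t k l * μ t i j l - L t l i * μ t l j k - L t l j * μ t i l k)) t)
    (hinit : ∀ i j k : Fin 4, i < j →
      (i, j, k) ≠ ((0 : Fin 4), (1 : Fin 4), (2 : Fin 4)) →
      (i, j, k) ≠ ((0 : Fin 4), (1 : Fin 4), (3 : Fin 4)) →
      (i, j, k) ≠ ((0 : Fin 4), (2 : Fin 4), (3 : Fin 4)) → μ 0 i j k = 0) :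
    ∀ t : ℝ, 0 ≤ t → (t : EReal) < T → ∀ i j k : Fin 4, i < j →
      (i, j, k) ≠ ((0 : Fin 4), (1 : Fin 4), (2 : Fin 4)) →
      (i, j, k) ≠ ((0 : Fin 4), (1 : Fin 4), (3 : Fin 4)) →
      (i, j, k) ≠ ((0 : Fin 4), (2 : Fin 4), (3 : Fin 4)) → μ t i j k = 0 := by
  intro t ht htT i j k hij h₁ h₂ h₃
  have hdom : ∀ s ∈ Icc 0 t, 0 ≤ s ∧ (s : EReal) < T := fun s hs =>
    ⟨hs.1, (EReal.coe_le_coe_iff.2 hs.2).trans_lt htT⟩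
  have hμ : ∀ s ∈ Icc 0 t, HasDerivAt μ (infAction ((1 / 2 : ℝ) • L s) (μ s)) s := by
    intro s hs
    rw [map_smul, LinearMap.smul_apply]
    exact hasDerivAt_pi.2 fun a => hasDerivAt_pi.2 fun b => hasDerivAt_pi.2 fun c =>
      hode s (hdom s hs).1 (hdom s hs).2 a b c
  refine components_eq_zero_of_hasDerivAt_infAction triangularStable_vanishingPattern
    (L := (1 / 2 : ℝ) • L) ((hLcont.mono hdom).const_smul _) (fun s hs k l hkl => ?_)
    (fun s _ a c => by linarith [hanti s a a c]) hμ
    (fun a b c => eq_zero_of_mem_vanishingPattern (hanti 0) hinit)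
    t ⟨ht, le_rfl⟩ i j k ((mem_vanishingPattern_of_lt hij).2 ⟨h₁, h₂, h₃⟩)
  simp [hLtri s (hdom s hs).1 (hdom s hs).2 k l hkl]

/-- preservation of the vanishing pattern of structure constants
under the gauged (lower-triangular) linear ODE `μ' = (1/2)·π(L)·μ` on
`Λ²(ℝ⁴)*⊗ℝ⁴`. Here an element `μ` of `Λ²(ℝ⁴)*⊗ℝ⁴` (an antisymmetric bilinear
map `ℝ⁴ × ℝ⁴ → ℝ⁴`) is represented by its components `μ i j k = ⟨μ(e_i,e_j), e_k⟩`,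
and for a matrix `A`, `(π(A)μ)(x,y) = A(μ(x,y)) − μ(Ax,y) − μ(x,Ay)`, whose
components are `(π(A)μ)_{ij}^k = ∑ l, (A k l·μ_{ij}^l − A l i·μ_{lj}^k − A l j·μ_{il}^k)`. -/
theorem gauged_flow_preserves_structure (T : EReal) (hT : 0 < T)
    (L : ℝ → Matrix (Fin 4) (Fin 4) ℝ)
    (hLcont : ContinuousOn L {t : ℝ | 0 ≤ t ∧ (t : EReal) < T})
    (hLtri : ∀ t : ℝ, 0 ≤ t → (t : EReal) < T → ∀ k l : Fin 4, k < l → L t k l = 0)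
    (μ : ℝ → Fin 4 → Fin 4 → Fin 4 → ℝ)
    (hanti : ∀ (t : ℝ) (i j k : Fin 4), μ t i j k = -μ t j i k)
    (hode : ∀ t : ℝ, 0 ≤ t → (t : EReal) < T → ∀ i j k : Fin 4,
      HasDerivAt (fun s => μ s i j k)
        ((1/2) * ∑ l : Fin 4,
          (L t k l * μ t i j l - L t l i * μ t l j k - L t l j * μ t i l k)) t)
    (hinit : ∀ i j k : Fin 4, i < j →
      (i, j, k) ≠ ((0 : Fin 4), (1 : Fin 4), (2 : Fin 4)) →
      (i, j, k) ≠ ((0 : Fin 4), (1 : Fin 4), (3 : Fin 4)) →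
      (i, j, k) ≠ ((0 : Fin 4), (2 : Fin 4), (3 : Fin 4)) → μ 0 i j k = 0) :
    ∀ t : ℝ, 0 ≤ t → (t : EReal) < T → ∀ i j k : Fin 4, i < j →
      (i, j, k) ≠ ((0 : Fin 4), (1 : Fin 4), (2 : Fin 4)) →
      (i, j, k) ≠ ((0 : Fin 4), (1 : Fin 4), (3 : Fin 4)) →
      (i, j, k) ≠ ((0 : Fin 4), (2 : Fin 4), (3 : Fin 4)) → μ t i j k = 0 :=
  gauged_flow_preserves_structure_general T L hLcont hLtri μ hanti hode hinit
end
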